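/- For words s of weight λ and t of weight λ' (λ a partition of m with conjugate λ'), the set G(s,t) = {w ∈ S_m : sgn_s(w·t) ≠ 0} is nonempty and is a single double coset Y_s · h · Y_t of the Young subgroups Y_s (stabilizer of s) and Y_t (stabilizer of t), for any h ∈ G(s,t). Moreover, for w = x h y with x ∈ Y_s, y ∈ Y_t one has sgn_s(w·t) = sgn(x)·sgn_s(h·t). -/

import Mathlib

open Finset

/-- Number of inversions of a word given as a list. -/
def invCount : List ℕ → ℕ
  | [] => 0
  | a :: l => l.countP (fun b => decide (b < a)) + invCount l

/-- Sign of a finite sequence: its permutation sign if it is a permutation of `1,…,k`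
(`k` = its length), and `0` otherwise. -/
def seqSgn (l : List ℕ) : ℤ :=
  if (l : Multiset ℕ) = ((List.range' 1 l.length : List ℕ) : Multiset ℕ) then
    (-1) ^ invCount l
  else 0

/-- Positions (in increasing order) of the letter `i` in the word `s`. -/
def blockList {m : ℕ} (s : Fin m → ℕ) (i : ℕ) : List (Fin m) :=
  (List.finRange m).filter (fun p => decide (s p = i))

/-- The blockwise signature `sgn_s(σ)`: the product over the blocks of `s` of the signs of
`σ` read along the block (in increasing position order). -/
def sgnWord {m : ℕ} (s σ : Fin m → ℕ) : ℤ :=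
  ∏ i ∈ Finset.range m, seqSgn ((blockList s (i + 1)).map σ)

/-- The action of `S_m` on words of length `m` by permuting positions: `(π·t) i = t (π⁻¹ i)`. -/
def pact {m : ℕ} (π : Equiv.Perm (Fin m)) (t : Fin m → ℕ) : Fin m → ℕ :=
  fun p => t (π⁻¹ p)

/-- `w` is a word of weight `L`: the letter `i+1` occurs exactly `L.getD i 0` times. -/
def hasWeight {m : ℕ} (w : Fin m → ℕ) (L : List ℕ) : Prop :=
  ∀ i : ℕ, (Finset.univ.filter (fun p => w p = i + 1)).card = L.getD i 0

/-- `L` is a partition of `m`. -/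
def IsPartitionOf (m : ℕ) (L : List ℕ) : Prop :=
  L.Pairwise (· ≥ ·) ∧ (∀ p ∈ L, 0 < p) ∧ L.sum = m

/-- The conjugate partition, as a list: its `j`-th part is `#{i : L i ≥ j+1}`. -/
def conjList (L : List ℕ) : List ℕ :=
  (List.range (L.headD 0)).map (fun j => L.countP (fun p => decide (j + 1 ≤ p)))

/-- The inversion sign `(−1)^w` of a word. -/
def wordSign {m : ℕ} (w : Fin m → ℕ) : ℤ :=
  (-1) ^ invCount ((List.finRange m).map w)

/-- The inversion sign `(−1)^λ` of a partition: the inversion sign of the word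
`1 2 … λ₁ 1 2 … λ₂ ⋯`. -/
def partSign (L : List ℕ) : ℤ :=
  (-1) ^ invCount ((L.map (fun p => List.range' 1 p)).flatten)

/-- The Young subgroup `Y_s`: the stabilizer of the word `s` in `S_m`. -/
def Ysub {m : ℕ} (s : Fin m → ℕ) : Set (Equiv.Perm (Fin m)) := {π | pact π s = s}

/-- `G(s,t) = {π ∈ S_m : sgn_s(π·t) ≠ 0}`. -/
def Gst {m : ℕ} (s t : Fin m → ℕ) : Set (Equiv.Perm (Fin m)) :=
  {π | sgnWord s (pact π t) ≠ 0}

/-!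
`w ∈ G(s,t)` says that along every block of `s` the word `w·t` reads a permutation of
`1, …, k`. Two such words `h·t` and `w·t` therefore differ by a permutation `x` that preserves
every block of `s`, whence `w = x h y` with `y ∈ Y_t`. Conversely `Y_t` fixes `t`, while
`x ∈ Y_s` is a product of transpositions inside blocks; each of them swaps two entries of one
block sequence, which changes the parity of its inversion number, so `sgn_s` gets multiplied
by `sgn x`. An element of `G(s,t)` comes from the Young diagram of `λ`: label each cell by its
column index and read row `i` along the `i`-th block of `s`; column `j` has `λ'ⱼ` cells,
exactly as many as there are letters `j` in `t`.
-/

theorem invCount_append (P Q : List ℕ) :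
    invCount (P ++ Q) =
      invCount P + invCount Q + (P.map fun a => Q.countP (· < a)).sum := by
  induction P with
  | nil => simp [invCount]
  | cons a P ih => simp only [List.cons_append, invCount, List.countP_append, ih,
      List.map_cons, List.sum_cons]; omega

theorem List.countP_lt_add_countP_gt {B : List ℕ} {x : ℕ} (hx : x ∉ B) :
    B.countP (· < x) + B.countP (x < ·) = B.length := by
  rw [List.length_eq_countP_add_countP (· < x)]
  congr 1
  refine List.countP_congr fun b hb => ?_
  have : b ≠ x := fun h => hx (h ▸ hb)
  simp only [decide_eq_true_eq, decide_not, Bool.not_eq_true', decide_eq_false_iff_not]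
  omega

theorem invCount_cons_append_cons (x y : ℕ) (B C : List ℕ) :
    invCount (x :: (B ++ y :: C)) =
      B.countP (· < x) + B.countP (y < ·) + (if y < x then 1 else 0) +
        (C.countP (· < x) + C.countP (· < y)) +
        (invCount B + invCount C + (B.map fun b => C.countP (· < b)).sum) := by
  have hcross : (B.map fun b => C.countP (· < b) + if y < b then 1 else 0).sum =
      (B.map fun b => C.countP (· < b)).sum + B.countP (y < ·) := by
    rw [List.sum_map_add]
    simp [List.sum_map_ite, List.countP_eq_length_filter]
  simp only [invCount, invCount_append, List.countP_append, List.countP_cons,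
    decide_eq_true_eq]
  split_ifs <;> omega

theorem odd_invCount_add_invCount_swap (A C : List ℕ) {B : List ℕ} {x y : ℕ} (hxy : x ≠ y)
    (hxB : x ∉ B) (hyB : y ∉ B) :
    Odd (invCount (A ++ x :: (B ++ y :: C)) + invCount (A ++ y :: (B ++ x :: C))) := by
  have hperm : (x :: (B ++ y :: C)).Perm (y :: (B ++ x :: C)) :=
    (List.perm_middle.cons x).trans ((List.Perm.swap y x _).trans (List.perm_middle.cons y).symm)
  have hcross : (A.map fun a => (x :: (B ++ y :: C)).countP (· < a)) =
      A.map fun a => (y :: (B ++ x :: C)).countP (· < a) :=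
    List.map_congr_left fun a _ => hperm.countP_eq _
  have hx := List.countP_lt_add_countP_gt hxB
  have hy := List.countP_lt_add_countP_gt hyB
  rw [invCount_append, invCount_append, hcross, invCount_cons_append_cons,
    invCount_cons_append_cons, Nat.odd_iff]
  split_ifs <;> omega

theorem seqSgn_swap (A B C : List ℕ) (x y : ℕ) :
    seqSgn (A ++ x :: (B ++ y :: C)) = -seqSgn (A ++ y :: (B ++ x :: C)) := by
  have hperm : (A ++ x :: (B ++ y :: C)).Perm (A ++ y :: (B ++ x :: C)) :=
    ((List.perm_middle.cons x).trans
      ((List.Perm.swap y x _).trans (List.perm_middle.cons y).symm)).append_left A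
  unfold seqSgn
  rw [Multiset.coe_eq_coe.2 hperm, hperm.length_eq]
  split_ifs with h
  · have hnd : (A ++ x :: (B ++ y :: C)).Nodup :=
      hperm.nodup_iff.2 (Multiset.coe_nodup.1 (h ▸ Multiset.coe_nodup.2 List.nodup_range'))
    simp only [List.nodup_append, List.nodup_cons, List.mem_append, List.mem_cons] at hnd
    have hodd := odd_invCount_add_invCount_swap A C (B := B) (x := x) (y := y)
      (by grind) (by grind) (by grind)
    have hprod : (-1 : ℤ) ^ invCount (A ++ x :: (B ++ y :: C)) *
        (-1) ^ invCount (A ++ y :: (B ++ x :: C)) = -1 := by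
      rw [← pow_add, hodd.neg_one_pow]
    rcases neg_one_pow_eq_or ℤ (invCount (A ++ y :: (B ++ x :: C))) with h' | h' <;>
      rw [h'] at hprod ⊢ <;> linarith
  · simp

theorem seqSgn_map_comp_swap_of_nodup_append {α : Type*} [DecidableEq α] {A B C : List α}
    {p q : α} (hl : (A ++ p :: (B ++ q :: C)).Nodup) (σ : α → ℕ) :
    seqSgn ((A ++ p :: (B ++ q :: C)).map (σ ∘ Equiv.swap p q)) =
      -seqSgn ((A ++ p :: (B ++ q :: C)).map σ) := by
  simp only [List.nodup_append, List.nodup_cons, List.mem_append, List.mem_cons] at hl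
  have hfix : ∀ X : List α, p ∉ X → q ∉ X → X.map (σ ∘ Equiv.swap p q) = X.map σ :=
    fun X hpX hqX => List.map_congr_left fun r hr => by
      rw [Function.comp_apply, Equiv.swap_apply_of_ne_of_ne (by grind) (by grind)]
  simp only [List.map_append, List.map_cons, Function.comp_apply, Equiv.swap_apply_left,
    Equiv.swap_apply_right, hfix A (by grind) (by grind), hfix B (by grind) (by grind),
    hfix C (by grind) (by grind)]
  exact seqSgn_swap _ _ _ _ _

theorem seqSgn_map_comp_swap {α : Type*} [DecidableEq α] {l : List α} (hl : l.Nodup)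
    {p q : α} (hp : p ∈ l) (hq : q ∈ l) (hpq : p ≠ q) (σ : α → ℕ) :
    seqSgn (l.map (σ ∘ Equiv.swap p q)) = -seqSgn (l.map σ) := by
  obtain ⟨A, D, rfl⟩ := List.append_of_mem hp
  rcases List.mem_append.1 hq with hqA | hqD
  · obtain ⟨B, C, rfl⟩ := List.append_of_mem hqA
    simp only [List.append_assoc, List.cons_append] at hl ⊢
    rw [Equiv.swap_comm]
    exact seqSgn_map_comp_swap_of_nodup_append hl σ
  · obtain ⟨B, C, rfl⟩ := List.append_of_mem ((List.mem_cons.1 hqD).resolve_left hpq.symm)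
    exact seqSgn_map_comp_swap_of_nodup_append hl σ

theorem seqSgn_ne_zero_iff (l : List ℕ) :
    seqSgn l ≠ 0 ↔ (l : Multiset ℕ) = (List.range' 1 l.length : Multiset ℕ) := by
  unfold seqSgn
  split_ifs with h <;> simp [h]

theorem Equiv.Perm.swap_induction_on_of_comp_eq {α β : Type*} [DecidableEq α] [Fintype α]
    (f : α → β) {motive : Equiv.Perm α → Prop} {x : Equiv.Perm α} (hx : f ∘ x = f)
    (one : motive 1)
    (swap_mul : ∀ (y : Equiv.Perm α) a b, a ≠ b → f a = f b → f ∘ y = f → motive y →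
      motive (Equiv.swap a b * y)) :
    motive x := by
  induction hn : x.support.card using Nat.strong_induction_on generalizing x with
  | _ n ih =>
  by_cases h1 : x = 1
  · exact h1 ▸ one
  obtain ⟨a, ha⟩ : ∃ a, x a ≠ a := not_forall.1 fun h => h1 (Equiv.Perm.ext h)
  have hfa : f (x a) = f a := congrFun hx a
  have hswap : f ∘ Equiv.swap a (x a) = f := by
    funext r
    rw [Function.comp_apply, Equiv.swap_apply_def]
    split_ifs <;> simp_all
  have hx' : f ∘ (Equiv.swap a (x a) * x) = f := by
    rw [Equiv.Perm.coe_mul, ← Function.comp_assoc, hswap, hx]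
  have key := swap_mul _ a (x a) ha.symm hfa.symm hx'
    (ih _ (hn ▸ Equiv.Perm.card_support_swap_mul ha) hx' rfl)
  rwa [← mul_assoc, Equiv.swap_mul_self, one_mul] at key

theorem exists_perm_comp_eq_of_fiberwise {α β γ : Type*} [Finite α] {s : α → β}
    {f g : α → γ} (hinj : ∀ a b, s a = s b → f a = f b → a = b)
    (hsurj : ∀ a, ∃ b, s b = s a ∧ g b = f a) :
    ∃ x : Equiv.Perm α, s ∘ x = s ∧ g ∘ x = f := by
  choose k hk using hsurj
  have hk_inj : Function.Injective k := fun a b hab =>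
    hinj a b (by rw [← (hk a).1, hab, (hk b).1]) (by rw [← (hk a).2, hab, (hk b).2])
  exact ⟨Equiv.ofBijective k (Finite.injective_iff_bijective.1 hk_inj),
    funext fun a => (hk a).1, funext fun a => (hk a).2⟩

theorem List.sum_range_getD (L : List ℕ) :
    ∑ i ∈ Finset.range L.length, L.getD i 0 = L.sum := by
  rw [← Fin.sum_univ_getElem, ← Fin.sum_univ_eq_sum_range]
  simp

theorem List.lt_countP_of_le_getD {L : List ℕ} (hL : L.Pairwise (· ≥ ·)) {i c : ℕ}
    (hi : i < L.length) (hc : c ≤ L.getD i 0) : i < L.countP (c ≤ ·) := by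
  have htake : (L.take (i + 1)).countP (c ≤ ·) = i + 1 := by
    rw [List.countP_eq_length.2, List.length_take]
    · omega
    intro a ha
    obtain ⟨j, hj, rfl⟩ := List.mem_take_iff_getElem.1 ha
    rw [List.getD_eq_getElem _ _ hi] at hc
    rcases Nat.lt_or_ge j i with hji | hji
    · exact decide_eq_true (hc.trans (List.pairwise_iff_getElem.1 hL j i _ hi hji))
    · obtain rfl : j = i := by omega
      exact decide_eq_true hc
  have := (List.take_sublist (i + 1) L).countP_le (p := (c ≤ ·))
  omega

theorem List.map_idxOf_add_one {α : Type*} [DecidableEq α] {l : List α} (hl : l.Nodup) :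
    l.map (fun a => l.idxOf a + 1) = List.range' 1 l.length := by
  refine List.ext_getElem (by simp) fun j h₁ h₂ => ?_
  simp only [List.getElem_map, List.getElem_range', hl.idxOf_getElem]
  omega

theorem conjList_getD {L : List ℕ} (hL : L.Pairwise (· ≥ ·)) (j : ℕ) :
    (conjList L).getD j 0 = L.countP (j + 1 ≤ ·) := by
  cases L with
  | nil => simp [conjList]
  | cons a T =>
    by_cases hj : j < a
    · simp [conjList, List.getD_eq_getElem?_getD, hj]
    · rw [List.getD_eq_default _ _ (by simp [conjList]; omega), eq_comm, List.countP_eq_zero]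
      intro b hb
      have : b ≤ a := by
        rcases List.mem_cons.1 hb with rfl | hbT
        · rfl
        · exact List.rel_of_pairwise_cons hL hbT
      simp only [decide_eq_true_eq]
      omega

theorem IsPartitionOf.length_le {m : ℕ} {L : List ℕ} (hL : IsPartitionOf m L) :
    L.length ≤ m :=
  hL.2.2 ▸ List.length_le_sum_of_one_le L hL.2.1

section Blocks

variable {m : ℕ} {s : Fin m → ℕ}

theorem mem_blockList {i : ℕ} {p : Fin m} : p ∈ blockList s i ↔ s p = i := by
  simp [blockList]

theorem nodup_blockList (s : Fin m → ℕ) (i : ℕ) : (blockList s i).Nodup :=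
  (List.nodup_finRange m).filter _

theorem sgnWord_comp_swap {p q : Fin m} (hsp : 1 ≤ s p ∧ s p ≤ m) (hpq : p ≠ q)
    (hspq : s p = s q) (σ : Fin m → ℕ) :
    sgnWord s (σ ∘ Equiv.swap p q) = -sgnWord s σ := by
  have hi : s p - 1 ∈ range m := mem_range.2 (by omega)
  unfold sgnWord
  rw [← mul_prod_erase _ _ hi, ← mul_prod_erase _ _ hi, Nat.sub_add_cancel hsp.1,
    seqSgn_map_comp_swap (nodup_blockList s _) (mem_blockList.2 rfl)
      (mem_blockList.2 hspq.symm) hpq, neg_mul]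
  congr 2
  refine prod_congr rfl fun i hi' => congrArg seqSgn (List.map_congr_left fun r hr => ?_)
  have hri := mem_blockList.1 hr
  have hip := (mem_erase.1 hi').1
  rw [Function.comp_apply, Equiv.swap_apply_of_ne_of_ne (by rintro rfl; omega)
    (by rintro rfl; omega)]

theorem sgnWord_comp_of_comp_eq (hs : ∀ r, 1 ≤ s r ∧ s r ≤ m) {x : Equiv.Perm (Fin m)}
    (hx : s ∘ x = s) (σ : Fin m → ℕ) :
    sgnWord s (σ ∘ x) = Equiv.Perm.sign x * sgnWord s σ := by
  refine Equiv.Perm.swap_induction_on_of_comp_eq s hx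
    (motive := fun x => ∀ σ, sgnWord s (σ ∘ x) = Equiv.Perm.sign x * sgnWord s σ)
    (fun σ => by simp) (fun x a b hab hsab _ ih σ => ?_) σ
  rw [Equiv.Perm.coe_mul, ← Function.comp_assoc, ih, sgnWord_comp_swap (hs a) hab hsab,
    Equiv.Perm.sign_mul, Equiv.Perm.sign_swap hab]
  push_cast
  ring

theorem pact_mul (a b : Equiv.Perm (Fin m)) (t : Fin m → ℕ) :
    pact (a * b) t = pact a (pact b t) := by
  simp [pact, funext_iff]

theorem sgnWord_pact_of_mem_Ysub (hs : ∀ r, 1 ≤ s r ∧ s r ≤ m) {x : Equiv.Perm (Fin m)}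
    (hx : x ∈ Ysub s) (σ : Fin m → ℕ) :
    sgnWord s (pact x σ) = Equiv.Perm.sign x * sgnWord s σ := by
  rw [← Equiv.Perm.sign_inv]
  exact sgnWord_comp_of_comp_eq hs hx σ

theorem sgnWord_pact_mul_mul (hs : ∀ r, 1 ≤ s r ∧ s r ≤ m) {t : Fin m → ℕ}
    {x y : Equiv.Perm (Fin m)} (hx : x ∈ Ysub s) (hy : y ∈ Ysub t) (h : Equiv.Perm (Fin m)) :
    sgnWord s (pact (x * h * y) t) = Equiv.Perm.sign x * sgnWord s (pact h t) := by
  rw [pact_mul, pact_mul, show pact y t = t from hy, sgnWord_pact_of_mem_Ysub hs hx]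

theorem mem_Ysub_iff_comp_eq {x : Equiv.Perm (Fin m)} : x ∈ Ysub s ↔ s ∘ x = s := by
  simp only [Ysub, Set.mem_ofPred_eq, pact, funext_iff, Function.comp_apply]
  constructor <;> intro h p
  · simpa using (h (x p)).symm
  · simpa using (h (x⁻¹ p)).symm

theorem sgnWord_ne_zero_iff (hs : ∀ r, 1 ≤ s r ∧ s r ≤ m) (σ : Fin m → ℕ) :
    sgnWord s σ ≠ 0 ↔ ∀ p, ((blockList s (s p)).map σ : Multiset ℕ) =
      (List.range' 1 (blockList s (s p)).length : Multiset ℕ) := by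
  simp only [sgnWord, prod_ne_zero_iff, seqSgn_ne_zero_iff, List.length_map]
  constructor
  · intro h p
    simpa only [Nat.sub_add_cancel (hs p).1] using h (s p - 1) (mem_range.2 (by grind))
  · intro h i _
    by_cases hnil : blockList s (i + 1) = []
    · simp [hnil]
    · obtain ⟨p, hp⟩ := List.exists_mem_of_ne_nil _ hnil
      rw [← mem_blockList.1 hp]
      exact h p

theorem mem_doubleCoset_of_mem_Gst {t : Fin m → ℕ} (hs : ∀ r, 1 ≤ s r ∧ s r ≤ m)
    {h w : Equiv.Perm (Fin m)} (hh : h ∈ Gst s t) (hw : w ∈ Gst s t) :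
    ∃ x ∈ Ysub s, ∃ y ∈ Ysub t, w = x * h * y := by
  have hh' := (sgnWord_ne_zero_iff hs _).1 hh
  have hw' := (sgnWord_ne_zero_iff hs _).1 hw
  obtain ⟨x, hsx, hwx⟩ := exists_perm_comp_eq_of_fiberwise (s := s) (f := pact h t)
    (g := pact w t) (fun a b hab hfab => by
      have hnd : ((blockList s (s a)).map (pact h t)).Nodup := by
        rw [← Multiset.coe_nodup, hh' a]
        exact Multiset.coe_nodup.2 List.nodup_range'
      exact List.inj_on_of_nodup_map hnd (mem_blockList.2 rfl) (mem_blockList.2 hab.symm) hfab)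
    (fun a => by
      have hmem : pact h t a ∈ ((blockList s (s a)).map (pact w t) : Multiset ℕ) := by
        rw [hw' a, ← hh' a]
        exact Multiset.mem_coe.2 (List.mem_map_of_mem (mem_blockList.2 rfl))
      obtain ⟨b, hb, hwb⟩ := List.mem_map.1 (Multiset.mem_coe.1 hmem)
      exact ⟨b, mem_blockList.1 hb, hwb⟩)
  refine ⟨x, mem_Ysub_iff_comp_eq.2 hsx, h⁻¹ * x⁻¹ * w, ?_, by group⟩
  have hxw : pact x⁻¹ (pact w t) = pact h t := hwx
  show pact (h⁻¹ * x⁻¹ * w) t = t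
  rw [pact_mul, pact_mul, hxw, ← pact_mul, inv_mul_cancel]
  rfl

theorem length_blockList {L : List ℕ} (hs : hasWeight s L) (i : ℕ) :
    (blockList s (i + 1)).length = L.getD i 0 := by
  rw [← hs i, ← List.toFinset_card_of_nodup (nodup_blockList s _)]
  congr 1
  ext p
  simp [mem_blockList]

theorem hasWeight.one_le_and_le_length {L : List ℕ} (hs : hasWeight s L) (hL : L.sum = m)
    (p : Fin m) : 1 ≤ s p ∧ s p ≤ L.length := by
  have hcard : #{q | 1 ≤ s q ∧ s q ≤ L.length} = m := by
    rw [card_eq_sum_card_fiberwise (f := fun q => s q - 1) (t := range L.length)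
      (fun q hq => by simp at hq ⊢; omega)]
    refine Eq.trans (sum_congr rfl fun i hi => ?_) (L.sum_range_getD.trans hL)
    rw [← hs i]
    congr 1
    ext q
    simp only [mem_filter, mem_univ, true_and, mem_range] at hi ⊢
    omega
  exact card_filter_eq_iff.1 (hcard.trans (card_fin m).symm) p (mem_univ p)

theorem hasWeight.one_le_and_le {L : List ℕ} (hs : hasWeight s L) (hL : IsPartitionOf m L)
    (p : Fin m) : 1 ≤ s p ∧ s p ≤ m :=
  have h := hs.one_le_and_le_length hL.2.2 p
  ⟨h.1, h.2.trans hL.length_le⟩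

end Blocks

theorem Gst_nonempty {m : ℕ} {L : List ℕ} (hL : IsPartitionOf m L) {s t : Fin m → ℕ}
    (hs : hasWeight s L) (ht : hasWeight t (conjList L)) : (Gst s t).Nonempty := by
  have hsb := hs.one_le_and_le_length hL.2.2
  obtain ⟨rk, hrk_def⟩ : ∃ rk : Fin m → ℕ, ∀ p, rk p = (blockList s (s p)).idxOf p :=
    ⟨_, fun _ => rfl⟩
  have hrk : ∀ p, rk p < L.getD (s p - 1) 0 := fun p => by
    rw [← length_blockList hs, Nat.sub_add_cancel (hsb p).1, hrk_def]
    exact List.idxOf_lt_length_iff.2 (mem_blockList.2 rfl)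
  have hlen : ∀ p, s p - 1 < (blockList t (rk p + 1)).length := fun p => by
    rw [length_blockList ht, conjList_getD hL.1]
    exact List.lt_countP_of_le_getD hL.1 (by have := hsb p; omega) (hrk p)
  -- `g` puts the cell in row `s p`, column `rk p + 1` of the Young diagram on the `(s p)`-th
  -- position carrying the letter `rk p + 1` in `t`; `hlen` says that this position exists.
  let g : Fin m → Fin m := fun p => (blockList t (rk p + 1))[s p - 1]'(hlen p)
  have htg : ∀ p, t (g p) = rk p + 1 := fun p => mem_blockList.1 (List.getElem_mem _)
  have hg : Function.Injective g := by
    intro p q hpq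
    have hrk_eq : rk p = rk q := by have := htg p; rw [hpq, htg q] at this; omega
    have hidx : ∀ r, (blockList t (rk r + 1)).idxOf (g r) = s r - 1 :=
      fun r => (nodup_blockList t _).idxOf_getElem _ _
    have hs_eq : s p = s q := by
      have := hidx p
      rw [hpq, hrk_eq, hidx q] at this
      have := hsb p; have := hsb q
      omega
    refine (List.idxOf_inj (mem_blockList.2 rfl : p ∈ blockList s (s p))).1 ?_
    rw [← hrk_def, hs_eq, ← hrk_def, hrk_eq]
  refine ⟨(Equiv.ofBijective g (Finite.injective_iff_bijective.1 hg))⁻¹,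
    (sgnWord_ne_zero_iff (hs.one_le_and_le hL) _).2 fun p => ?_⟩
  congr 1
  rw [← List.map_idxOf_add_one (nodup_blockList s _)]
  refine List.map_congr_left fun r hr => ?_
  simp only [pact, inv_inv, Equiv.ofBijective_apply]
  rw [htg, hrk_def, mem_blockList.1 hr]

/-- `G(s,t)` is nonempty and is a single double coset `Y_s · h · Y_t` for any
`h ∈ G(s,t)`; moreover `sgn_s((xhy)·t) = sgn(x)·sgn_s(h·t)` for `x ∈ Y_s`, `y ∈ Y_t`. -/
theorem stmt1 {m : ℕ} (L : List ℕ) (hL : IsPartitionOf m L)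
    (s t : Fin m → ℕ) (hs : hasWeight s L) (ht : hasWeight t (conjList L)) :
    (Gst s t).Nonempty ∧
      ∀ h ∈ Gst s t,
        (Gst s t = {w | ∃ x ∈ Ysub s, ∃ y ∈ Ysub t, w = x * h * y}) ∧
        ∀ x ∈ Ysub s, ∀ y ∈ Ysub t,
          sgnWord s (pact (x * h * y) t) =
            ((Equiv.Perm.sign x : ℤ)) * sgnWord s (pact h t) := by
  have hsb := hs.one_le_and_le hL
  refine ⟨Gst_nonempty hL hs ht, fun h hh =>
    ⟨Set.ext fun w => ⟨mem_doubleCoset_of_mem_Gst hsb hh, ?_⟩,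
      fun x hx y hy => sgnWord_pact_mul_mul hsb hx hy h⟩⟩
  rintro ⟨x, hx, y, hy, rfl⟩
  show sgnWord s _ ≠ 0
  rw [sgnWord_pact_mul_mul hsb hx hy h]
  exact mul_ne_zero (Units.ne_zero _) hh
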